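/- arXiv:2003.10034 — 2 statements merged into one kernel-verified Lean document; each statement's English description precedes it below -/
import Mathlib

section
/- Let T be the infinite rooted k-ary tree with k ≥ 2, w(x) = Σ_{j≥0} k^{−j} χ_{T^j}(x), and f_j = 3χ_{T^j}. Then for every x ∈ T^i with 0 ≤ i ≤ j, M°f_j(x) ≥ 3/2 > 1; consequently ∪_{i=0}^{j} T^i ⊆ {M°f_j > 1} and w({M°f_j > 1}) ≥ j. -/
open scoped ENNReal NNReal BigOperators

noncomputable section

/-- Vertices of the infinite rooted `k`-ary tree: finite words over `Fin k`. -/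
abbrev V (k : ℕ) := List (Fin k)

/-- Length of the longest common prefix (depth of the deepest common ancestor). -/
def lcpLen {k : ℕ} : List (Fin k) → List (Fin k) → ℕ
  | a :: as, b :: bs => if a = b then lcpLen as bs + 1 else 0
  | _, _ => 0

/-- Graph distance on the infinite rooted `k`-ary tree. -/
def tdist {k : ℕ} (x y : V k) : ℕ :=
  (x.length - lcpLen x y) + (y.length - lcpLen x y)

/-- Sphere of radius `r` centered at `x`. -/
def sph {k : ℕ} (x : V k) (r : ℕ) : Set (V k) := {y | tdist x y = r}

/-- Closed ball of radius `r` centered at `x`. -/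
def ball {k : ℕ} (x : V k) (r : ℕ) : Set (V k) := {y | tdist x y ≤ r}

def sphCard {k : ℕ} (x : V k) (r : ℕ) : ℝ≥0∞ := ((sph x r).ncard : ℝ≥0∞)
def ballCard {k : ℕ} (x : V k) (r : ℕ) : ℝ≥0∞ := ((ball x r).ncard : ℝ≥0∞)

/-- `w(A) = Σ_{y ∈ A} w(y)`, the weighted (counting) measure of `A`. -/
def wsum {k : ℕ} (w : V k → ℝ≥0∞) (A : Set (V k)) : ℝ≥0∞ := ∑' y : A, w ↑y

/-- Spherical average `A_r° f (x)`. -/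
def sphAvg {k : ℕ} (f : V k → ℝ≥0∞) (x : V k) (r : ℕ) : ℝ≥0∞ :=
  wsum f (sph x r) / sphCard x r

/-- Spherical maximal operator `M°`. -/
def Msph {k : ℕ} (f : V k → ℝ≥0∞) (x : V k) : ℝ≥0∞ := ⨆ r : ℕ, sphAvg f x r

/-- Centered Hardy–Littlewood maximal operator `M`. -/
def Mball {k : ℕ} (f : V k → ℝ≥0∞) (x : V k) : ℝ≥0∞ :=
  ⨆ r : ℕ, wsum f (ball x r) / ballCard x r

/-- `|f|` of a real-valued function, as an `ℝ≥0∞`-valued function. -/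
def absE {k : ℕ} (f : V k → ℝ) : V k → ℝ≥0∞ := fun y => ENNReal.ofReal |f y|

/-- `M_s w = (M(w^s))^{1/s}` (centered version). -/
def MsBall {k : ℕ} (s : ℝ) (w : V k → ℝ≥0∞) (x : V k) : ℝ≥0∞ :=
  (Mball (fun y => w y ^ s) x) ^ (1 / s)

/-- `M_s° w = (M°(w^s))^{1/s}` (spherical version). -/
def MsSph {k : ℕ} (s : ℝ) (w : V k → ℝ≥0∞) (x : V k) : ℝ≥0∞ :=
  (Msph (fun y => w y ^ s) x) ^ (1 / s)

/-- The radial weight `w(x) = k^{-depth x}`. -/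
def wm (k : ℕ) : V k → ℝ≥0∞ := fun x => (k : ℝ≥0∞) ^ (-(x.length : ℝ))

/-- `f_j = 3 χ_{T^j}`. -/
def fj (k j : ℕ) : V k → ℝ := fun x => if x.length = j then (3 : ℝ) else 0

/-!
Let `x` have depth `i ≤ j`. The sphere of radius `j - i` about `x` contains the `k ^ (j - i)`
descendants of `x` at depth `j`, on which `f_j = 3`; and each of its points is reached by going
up `d ≤ j - i` levels and then down `j - i - d`, so it has at most
`∑_{m ≤ j-i} k ^ m ≤ 2 k ^ (j - i)` points. Hence the spherical average at radius `j - i` is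
at least `3 / 2`. Since every level `T^m` has weight `k ^ m · k ^ (-m) = 1`, the levels below `j`
already have weight `j`.
-/

lemma encard_setOf_length_eq (k m : ℕ) : {t : V k | t.length = m}.encard = k ^ m := by
  rw [← ENat.card_coe_set_eq]
  change ENat.card (List.Vector (Fin k) m) = _
  simp [ENat.card_eq_coe_fintype_card, card_vector]

section WordTree

variable {k : ℕ}

lemma lcpLen_le_length_left : ∀ x y : V k, lcpLen x y ≤ x.length
  | [], _ | _ :: _, [] => by simp [lcpLen]
  | a :: as, b :: bs => by
    by_cases h : a = b <;> simp [lcpLen, h, lcpLen_le_length_left as bs]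

lemma lcpLen_le_length_right : ∀ x y : V k, lcpLen x y ≤ y.length
  | [], _ | _ :: _, [] => by simp [lcpLen]
  | a :: as, b :: bs => by
    by_cases h : a = b <;> simp [lcpLen, h, lcpLen_le_length_right as bs]

lemma take_lcpLen_eq : ∀ x y : V k, x.take (lcpLen x y) = y.take (lcpLen x y)
  | [], _ | _ :: _, [] => by simp [lcpLen]
  | a :: as, b :: bs => by
    by_cases h : a = b <;> simp [lcpLen, h, take_lcpLen_eq as bs]

lemma lcpLen_append_self : ∀ x t : V k, lcpLen x (x ++ t) = x.length
  | [], _ => by simp [lcpLen]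
  | a :: as, t => by simp [lcpLen, lcpLen_append_self as t]

lemma tdist_append_self (x t : V k) : tdist x (x ++ t) = t.length := by
  simp [tdist, lcpLen_append_self]

lemma sph_subset_biUnion (x : V k) (n : ℕ) :
    sph x n ⊆ ⋃ d ∈ Finset.range (n + 1),
      (x.take (x.length - d) ++ ·) '' {t : V k | t.length = n - d} := by
  intro y hy
  have hl := lcpLen_le_length_left x y
  have hr := lcpLen_le_length_right x y
  have hdist : (x.length - lcpLen x y) + (y.length - lcpLen x y) = n := hy
  refine Set.mem_biUnion (x := x.length - lcpLen x y) (by simp; omega)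
    ⟨y.drop (lcpLen x y), by simp; omega, ?_⟩
  rw [show x.length - (x.length - lcpLen x y) = lcpLen x y by omega, take_lcpLen_eq]
  exact List.take_append_drop _ y

lemma geomSum_range_succ_le (hk : 2 ≤ k) (n : ℕ) :
    ∑ m ∈ Finset.range (n + 1), k ^ m ≤ 2 * k ^ n := by
  have := Nat.geomSum_lt hk (s := Finset.range n) (n := n) (by simp)
  rw [Finset.sum_range_succ]
  omega

lemma encard_sph_le (hk : 2 ≤ k) (x : V k) (n : ℕ) : (sph x n).encard ≤ (2 * k ^ n : ℕ) :=
  calc (sph x n).encard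
      ≤ ∑ d ∈ Finset.range (n + 1),
          ((x.take (x.length - d) ++ ·) '' {t : V k | t.length = n - d}).encard :=
        (Set.encard_le_encard (sph_subset_biUnion x n)).trans (Finset.set_encard_biUnion_le _ _)
    _ ≤ ∑ d ∈ Finset.range (n + 1), ((k ^ (n - d) : ℕ) : ℕ∞) :=
        Finset.sum_le_sum fun d _ =>
          (Set.encard_image_le _ _).trans (by rw [encard_setOf_length_eq]; push_cast; rfl)
    _ = (∑ m ∈ Finset.range (n + 1), k ^ m : ℕ) := by
        rw [← Finset.sum_range_reflect (fun m => k ^ m) (n + 1)]; simp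
    _ ≤ (2 * k ^ n : ℕ) := by exact_mod_cast geomSum_range_succ_le hk n

lemma sphCard_le (hk : 2 ≤ k) (x : V k) (n : ℕ) : sphCard x n ≤ 2 * k ^ n := by
  have hle := encard_sph_le hk x n
  rw [sphCard, ← ENat.toENNReal_coe, (Set.finite_of_encard_le_coe hle).cast_ncard_eq]
  exact_mod_cast hle

end WordTree

section WeightedSum

variable {k : ℕ}

lemma wsum_mono (w : V k → ℝ≥0∞) {A B : Set (V k)} (h : A ⊆ B) : wsum w A ≤ wsum w B :=
  ENNReal.tsum_mono_subtype w h

lemma wsum_union (w : V k → ℝ≥0∞) {A B : Set (V k)} (h : Disjoint A B) :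
    wsum w (A ∪ B) = wsum w A + wsum w B :=
  ENNReal.summable.tsum_union_disjoint h ENNReal.summable

lemma wsum_eq_encard_mul {w : V k → ℝ≥0∞} {A : Set (V k)} {c : ℝ≥0∞}
    (hc : ∀ y ∈ A, w y = c) : wsum w A = A.encard * c := by
  rw [wsum, tsum_congr fun y : A => hc y y.2, ENNReal.tsum_set_const]

lemma wsum_wm_setOf_length_eq (hk : k ≠ 0) (m : ℕ) :
    wsum (wm k) {x : V k | x.length = m} = 1 := by
  rw [wsum_eq_encard_mul (c := (k : ℝ≥0∞) ^ (-(m : ℝ))) fun y hy => by simp_all [wm],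
    encard_setOf_length_eq]
  have hk₀ : (k : ℝ≥0∞) ≠ 0 := by exact_mod_cast hk
  push_cast
  rw [← ENNReal.rpow_natCast, ← ENNReal.rpow_add _ _ hk₀ (ENNReal.natCast_ne_top k)]
  simp

lemma wsum_wm_setOf_length_lt (hk : k ≠ 0) : ∀ m : ℕ, wsum (wm k) {x : V k | x.length < m} = m
  | 0 => by simp [wsum]
  | m + 1 => by
    have hsplit : {x : V k | x.length < m + 1} = {x | x.length < m} ∪ {x | x.length = m} := by
      ext; simp only [Set.mem_ofPred_eq, Set.mem_union]; omega
    rw [hsplit, wsum_union _ (Set.disjoint_left.mpr fun _ h₁ h₂ => by simp_all),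
      wsum_wm_setOf_length_lt hk m, wsum_wm_setOf_length_eq hk m]
    push_cast; rfl

end WeightedSum

lemma three_halves_le_sphAvg {k j : ℕ} (hk : 2 ≤ k) {x : V k} (hx : x.length ≤ j) :
    3 / 2 ≤ sphAvg (absE (fj k j)) x (j - x.length) := by
  set n := j - x.length
  set D := (x ++ ·) '' {t : V k | t.length = n}
  have hD : D ⊆ sph x n := by
    rintro _ ⟨t, ht, rfl⟩
    exact (tdist_append_self x t).trans ht
  have hDcard : D.encard = k ^ n :=
    (List.append_right_injective x).encard_image _ |>.trans (encard_setOf_length_eq k n)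
  have hf : ∀ y ∈ D, absE (fj k j) y = 3 := by
    rintro _ ⟨t, ht : t.length = n, rfl⟩
    have : (x ++ t).length = j := by simp only [List.length_append]; omega
    norm_num [absE, fj, this]
  have hk₀ : (k : ℝ≥0∞) ^ n ≠ 0 := pow_ne_zero _ (by exact_mod_cast (by omega : k ≠ 0))
  have hnum : 3 * (k : ℝ≥0∞) ^ n ≤ wsum (absE (fj k j)) (sph x n) :=
    calc 3 * (k : ℝ≥0∞) ^ n = wsum (absE (fj k j)) D := by
          rw [wsum_eq_encard_mul hf, hDcard]; push_cast; ring
      _ ≤ _ := wsum_mono _ hD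
  calc (3 / 2 : ℝ≥0∞) = 3 * (k : ℝ≥0∞) ^ n / (2 * (k : ℝ≥0∞) ^ n) :=
        (ENNReal.mul_div_mul_right 3 2 hk₀ (by simp)).symm
    _ ≤ sphAvg (absE (fj k j)) x n :=
        ENNReal.div_le_div hnum (by exact_mod_cast sphCard_le hk x n)

/-- For every `x` of depth `i ≤ j`, `M°f_j(x) ≥ 3/2 > 1`; consequently
`∪_{i≤j} T^i ⊆ {M°f_j > 1}` and `w({M°f_j > 1}) ≥ j`. -/
theorem stmt10 (k : ℕ) (hk : 2 ≤ k) (j : ℕ) :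
    (∀ i ≤ j, ∀ x : V k, x.length = i →
        (3 / 2 : ℝ≥0∞) ≤ Msph (absE (fj k j)) x) ∧
    {x : V k | x.length ≤ j} ⊆ {x : V k | 1 < Msph (absE (fj k j)) x} ∧
    (j : ℝ≥0∞) ≤ wsum (wm k) {x : V k | 1 < Msph (absE (fj k j)) x} := by
  have hM : ∀ x : V k, x.length ≤ j → 3 / 2 ≤ Msph (absE (fj k j)) x := fun x hx =>
    (three_halves_le_sphAvg hk hx).trans (le_iSup (sphAvg _ x) _)
  have hsub : {x : V k | x.length ≤ j} ⊆ {x : V k | 1 < Msph (absE (fj k j)) x} :=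
    fun x hx => lt_of_lt_of_le (by norm_num [ENNReal.lt_div_iff_mul_lt]) (hM x hx)
  refine ⟨fun i hi x hx => hM x (hx ▸ hi), hsub, ?_⟩
  calc (j : ℝ≥0∞) = wsum (wm k) {x : V k | x.length < j} :=
        (wsum_wm_setOf_length_lt (by omega) j).symm
    _ ≤ _ := wsum_mono _ fun x (hx : x.length < j) => hsub hx.le
end
end

section
/- Let T be the infinite rooted k-ary tree with k ≥ 2 and 1 < q ≤ p < ∞. Then the vector-valued maximal inequality ‖(Σ_{j=1}^∞ (Mf_j)^q)^{1/q}‖_{L^p(T)} ≤ c_{p,q} ‖(Σ_{j=1}^∞ |f_j|^q)^{1/q}‖_{L^p(T)} holds for all sequences (f_j) of functions on T. -/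
/-!
The centered maximal function is dominated pointwise by the positive operator
`T f (x) = ∑ y, k ^ (-d(x,y)) * f y`, because a ball of radius `r` has at least `k ^ r`
vertices. By Minkowski's inequality `‖(T f_j x)_j‖_{ℓ^q} ≤ T (‖(f_j ·)_j‖_{ℓ^q}) x`, so it is
enough that `T` is bounded on `ℓ^p` for `p > 1`. This is a Schur test with the weight
`h x = k ^ (-|x| / (p p'))`: for `k⁻¹ < ρ < 1` one has
`∑ y, k ^ (-d(x,y)) * ρ ^ |y| ≤ C_ρ * ρ ^ |x|`, since `y` is determined by its branch point on
the path from the root to `x` and the word below it, and both resulting geometric series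
converge.
-/

open scoped ENNReal NNReal BigOperators

noncomputable section

namespace ENNReal

variable {ι κ : Type*}

theorem tsum_iSup_of_monotone {α : Type*} [Preorder α] [IsDirectedOrder α]
    {f : ι → α → ℝ≥0∞} (hf : ∀ i, Monotone (f i)) :
    ∑' i, ⨆ a, f i a = ⨆ a, ∑' i, f i a := by
  simp_rw [ENNReal.tsum_eq_iSup_sum, finsetSum_iSup_of_monotone hf]
  exact iSup_comm

theorem iSup_rpow {α : Sort*} (f : α → ℝ≥0∞) {p : ℝ} (hp : 0 < p) :
    (⨆ a, f a) ^ p = ⨆ a, f a ^ p :=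
  (orderIsoRpow p hp).map_iSup f

theorem inner_le_Lp_mul_Lq_tsum (f g : ι → ℝ≥0∞) {p q : ℝ} (hpq : p.HolderConjugate q) :
    ∑' i, f i * g i ≤ (∑' i, f i ^ p) ^ (1 / p) * (∑' i, g i ^ q) ^ (1 / q) := by
  rw [ENNReal.tsum_eq_iSup_sum]
  refine iSup_le fun s => (inner_le_Lp_mul_Lq s f g hpq).trans ?_
  gcongr
  exacts [hpq.one_div_nonneg, ENNReal.sum_le_tsum s, hpq.symm.one_div_nonneg,
    ENNReal.sum_le_tsum s]

theorem Lp_add_le_tsum (f g : ι → ℝ≥0∞) {p : ℝ} (hp : 1 ≤ p) :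
    (∑' i, (f i + g i) ^ p) ^ (1 / p) ≤
      (∑' i, f i ^ p) ^ (1 / p) + (∑' i, g i ^ p) ^ (1 / p) := by
  rw [ENNReal.tsum_eq_iSup_sum, iSup_rpow _ (by positivity)]
  refine iSup_le fun s => (Lp_add_le s f g hp).trans ?_
  gcongr <;> exact ENNReal.sum_le_tsum s

theorem Lp_sum_le_sum_Lp (a : ι → κ → ℝ≥0∞) {p : ℝ} (hp : 1 ≤ p) (s : Finset κ) :
    (∑' i, (∑ y ∈ s, a i y) ^ p) ^ (1 / p) ≤ ∑ y ∈ s, (∑' i, a i y ^ p) ^ (1 / p) := by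
  classical
  have hp0 : 0 < p := by linarith
  induction s using Finset.cons_induction with
  | empty => simp [ENNReal.zero_rpow_of_pos, hp0]
  | cons y s hys ih =>
    simp only [Finset.sum_cons]
    exact (Lp_add_le_tsum _ _ hp).trans (add_le_add le_rfl ih)

theorem Lp_tsum_le_tsum_Lp (a : ι → κ → ℝ≥0∞) {p : ℝ} (hp : 1 ≤ p) :
    (∑' i, (∑' y, a i y) ^ p) ^ (1 / p) ≤ ∑' y, (∑' i, a i y ^ p) ^ (1 / p) := by
  have hp0 : 0 < p := by linarith
  have hmono : ∀ i, Monotone fun s : Finset κ => (∑ y ∈ s, a i y) ^ p := fun i s t hst =>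
    ENNReal.rpow_le_rpow (Finset.sum_le_sum_of_subset hst) hp0.le
  simp_rw [ENNReal.tsum_eq_iSup_sum (f := a _), iSup_rpow _ hp0]
  rw [tsum_iSup_of_monotone hmono, iSup_rpow _ (by positivity)]
  exact iSup_le fun s => (Lp_sum_le_sum_Lp a hp s).trans (ENNReal.sum_le_tsum s)

end ENNReal

theorem schur_test {ι : Type*} (K : ι → ι → ℝ≥0∞) {p p' : ℝ} (hpp' : p.HolderConjugate p')
    {h : ι → ℝ≥0∞} (h0 : ∀ i, h i ≠ 0) (htop : ∀ i, h i ≠ ∞) {A B : ℝ≥0∞}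
    (hrow : ∀ x, ∑' y, K x y * h y ^ p' ≤ A * h x ^ p')
    (hcol : ∀ y, ∑' x, K x y * h x ^ p ≤ B * h y ^ p) (g : ι → ℝ≥0∞) :
    ∑' x, (∑' y, K x y * g y) ^ p ≤ A ^ (p - 1) * B * ∑' x, g x ^ p := by
  have hp := hpp'.pos
  have hp' := hpp'.symm.pos
  have hgh : ∀ y, g y / h y * h y = g y := fun y => ENNReal.div_mul_cancel (h0 y) (htop y)
  have pointwise : ∀ x, (∑' y, K x y * g y) ^ p ≤
      A ^ (p - 1) * h x ^ p * ∑' y, K x y * (g y / h y) ^ p := by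
    intro x
    have hsplit : ∀ y, K x y * g y =
        K x y ^ (1 / p) * (g y / h y) * (K x y ^ (1 / p') * h y) := by
      intro y
      have hK : K x y ^ (1 / p) * K x y ^ (1 / p') = K x y := by
        rw [← ENNReal.rpow_add_of_nonneg _ _ hpp'.one_div_nonneg hpp'.symm.one_div_nonneg,
          hpp'.one_div_add_one_div, one_div_one, ENNReal.rpow_one]
      calc K x y * g y = K x y ^ (1 / p) * K x y ^ (1 / p') * (g y / h y * h y) := by
            rw [hK, hgh]
        _ = _ := by ring
    have holder := ENNReal.inner_le_Lp_mul_Lq_tsum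
      (fun y => K x y ^ (1 / p) * (g y / h y)) (fun y => K x y ^ (1 / p') * h y) hpp'
    simp only [ENNReal.mul_rpow_of_nonneg _ _ hp.le, ENNReal.mul_rpow_of_nonneg _ _ hp'.le,
      ← ENNReal.rpow_mul, one_div_mul_cancel hp.ne', one_div_mul_cancel hp'.ne',
      ENNReal.rpow_one, ← tsum_congr hsplit] at holder
    calc (∑' y, K x y * g y) ^ p
        ≤ ((∑' y, K x y * (g y / h y) ^ p) ^ (1 / p) * (A * h x ^ p') ^ (1 / p')) ^ p := by
          gcongr
          exact holder.trans (by gcongr; exact hrow x)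
      _ = A ^ (p - 1) * h x ^ p * ∑' y, K x y * (g y / h y) ^ p := by
          have hexp : 1 / p' * p = p - 1 := by rw [one_div_mul_eq_div, hpp'.div_conj_eq_sub_one]
          have hexp' : p' * (p - 1) = p := by
            rw [← hexp, ← mul_assoc, mul_one_div_cancel hp'.ne', one_mul]
          rw [ENNReal.mul_rpow_of_nonneg _ _ hp.le, ← ENNReal.rpow_mul, ← ENNReal.rpow_mul,
            one_div_mul_cancel hp.ne', ENNReal.rpow_one, hexp,
            ENNReal.mul_rpow_of_nonneg _ _ hpp'.sub_one_pos.le, ← ENNReal.rpow_mul, hexp']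
          ring
  calc ∑' x, (∑' y, K x y * g y) ^ p
      ≤ ∑' x, A ^ (p - 1) * h x ^ p * ∑' y, K x y * (g y / h y) ^ p :=
        ENNReal.tsum_le_tsum pointwise
    _ = A ^ (p - 1) * ∑' y, (g y / h y) ^ p * ∑' x, K x y * h x ^ p := by
        simp_rw [← ENNReal.tsum_mul_left]
        rw [ENNReal.tsum_comm]
        exact tsum_congr fun y => tsum_congr fun x => by ring
    _ ≤ A ^ (p - 1) * ∑' y, (g y / h y) ^ p * (B * h y ^ p) := by
        gcongr with y
        exact hcol y
    _ = A ^ (p - 1) * B * ∑' y, g y ^ p := by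
        rw [mul_assoc, ← ENNReal.tsum_mul_left (a := B)]
        congr 1
        exact tsum_congr fun y => by
          rw [mul_left_comm, ← ENNReal.mul_rpow_of_nonneg _ _ hp.le, hgh]

section KaryTree

variable {k : ℕ}

theorem lcpLen_comm (a b : List (Fin k)) : lcpLen a b = lcpLen b a := by
  induction a generalizing b with
  | nil => cases b <;> rfl
  | cons x xs ih =>
    cases b with
    | nil => rfl
    | cons y ys =>
      by_cases h : x = y
      · subst h; simp [lcpLen, ih]
      · simp [lcpLen, h, Ne.symm h]

theorem lcpLen_le_length_left_s15 (a b : List (Fin k)) : lcpLen a b ≤ a.length := by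
  induction a generalizing b with
  | nil => simp [lcpLen]
  | cons x xs ih =>
    cases b with
    | nil => simp [lcpLen]
    | cons y ys => by_cases h : x = y <;> simp [lcpLen, h, ih ys]

theorem lcpLen_le_length_right_s15 (a b : List (Fin k)) : lcpLen a b ≤ b.length :=
  lcpLen_comm a b ▸ lcpLen_le_length_left_s15 b a

theorem take_lcpLen_append_drop (a b : List (Fin k)) :
    a.take (lcpLen a b) ++ b.drop (lcpLen a b) = b := by
  induction a generalizing b with
  | nil => simp [lcpLen]
  | cons x xs ih =>
    cases b with
    | nil => simp [lcpLen]
    | cons y ys =>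
      by_cases h : x = y
      · subst h; simp [lcpLen, ih]
      · simp [lcpLen, h]

theorem lcpLen_append_right (a w : List (Fin k)) : lcpLen a (a ++ w) = a.length := by
  induction a with
  | nil => simp [lcpLen]
  | cons x xs ih => simp [lcpLen, ih]

theorem tdist_comm (x y : V k) : tdist x y = tdist y x := by
  unfold tdist; rw [lcpLen_comm]; omega

theorem tdist_append_right (x : V k) (w : List (Fin k)) : tdist x (x ++ w) = w.length := by
  simp [tdist, lcpLen_append_right]

theorem length_le_length_add_tdist (x y : V k) : y.length ≤ x.length + tdist x y := by
  have := lcpLen_le_length_left_s15 x y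
  unfold tdist; omega

theorem ball_finite (x : V k) (r : ℕ) : (ball x r).Finite :=
  (List.finite_length_le (Fin k) (x.length + r)).subset fun y hy =>
    (length_le_length_add_tdist x y).trans (Nat.add_le_add_left hy _)

theorem pow_le_ballCard (x : V k) (r : ℕ) : (k : ℝ≥0∞) ^ r ≤ ballCard x r := by
  let extend : List.Vector (Fin k) r → V k := fun w => x ++ w.toList
  have hinj : extend.Injective := fun a b hab =>
    List.Vector.toList_injective (List.append_cancel_left hab)
  have hsub : Set.range extend ⊆ ball x r := by
    rintro _ ⟨w, rfl⟩
    simp [ball, extend, tdist_append_right]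
  have hcard : (Set.range extend).ncard = k ^ r := by
    rw [← Nat.card_coe_set_eq, Nat.card_range_of_injective hinj, Nat.card_eq_fintype_card,
      card_vector, Fintype.card_fin]
  have := Set.ncard_le_ncard hsub (ball_finite x r)
  rw [hcard] at this
  unfold ballCard
  exact_mod_cast this

def treeKernel (x y : V k) : ℝ≥0∞ := (k : ℝ≥0∞)⁻¹ ^ tdist x y

theorem treeKernel_comm (x y : V k) : treeKernel x y = treeKernel y x := by
  rw [treeKernel, treeKernel, tdist_comm]

theorem Mball_le_tsum_treeKernel_mul (hk : k ≠ 0) (f : V k → ℝ≥0∞) (x : V k) :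
    Mball f x ≤ ∑' y, treeKernel x y * f y := by
  refine iSup_le fun r => ?_
  have hk1 : (k : ℝ≥0∞)⁻¹ ≤ 1 :=
    ENNReal.inv_le_one.2 (by exact_mod_cast Nat.one_le_iff_ne_zero.2 hk)
  calc wsum f (ball x r) / ballCard x r
      ≤ wsum f (ball x r) / (k : ℝ≥0∞) ^ r := ENNReal.div_le_div_left (pow_le_ballCard x r) _
    _ = ∑' y : ball x r, (k : ℝ≥0∞)⁻¹ ^ r * f y := by
        rw [wsum, div_eq_mul_inv, ← ENNReal.tsum_mul_right, ENNReal.inv_pow]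
        simp_rw [mul_comm]
    _ ≤ ∑' y : ball x r, treeKernel x y * f y := by
        gcongr with y
        exact pow_le_pow_right_of_le_one' hk1 y.2
    _ ≤ ∑' y, treeKernel x y * f y :=
        ENNReal.tsum_comp_le_tsum_of_injective Subtype.val_injective _

theorem tsum_pow_length (c : ℝ≥0∞) :
    ∑' t : List (Fin k), c ^ t.length = ∑' n : ℕ, ((k : ℝ≥0∞) * c) ^ n := by
  rw [← (Equiv.sigmaFiberEquiv List.length).tsum_eq, ENNReal.tsum_sigma']
  refine tsum_congr fun n => ?_
  calc ∑' t : List.Vector (Fin k) n, c ^ t.toList.length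
      = ∑' _ : List.Vector (Fin k) n, c ^ n := tsum_congr fun t => by rw [t.toList_length]
    _ = ((k : ℝ≥0∞) * c) ^ n := by
        rw [tsum_fintype, Finset.sum_const, Finset.card_univ, card_vector, Fintype.card_fin,
          nsmul_eq_mul, mul_pow, Nat.cast_pow]

theorem tsum_treeKernel_mul_pow_length_le (hk : k ≠ 0) {ρ : ℝ≥0∞} (hρ0 : ρ ≠ 0) (hρ_top : ρ ≠ ∞)
    (x : V k) :
    ∑' y, treeKernel x y * ρ ^ y.length ≤
      (1 - (k : ℝ≥0∞)⁻¹ * ρ⁻¹)⁻¹ * (1 - ρ)⁻¹ * ρ ^ x.length := by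
  set κ : ℝ≥0∞ := (k : ℝ≥0∞)⁻¹
  -- `y` is determined by the height above `x` of the point where it leaves the path to `x`,
  -- and by the word below that point
  let branch : V k → ℕ × List (Fin k) := fun y =>
    (x.length - lcpLen x y, y.drop (lcpLen x y))
  have hinj : branch.Injective := by
    intro y₁ y₂ h
    simp only [branch, Prod.mk.injEq] at h
    have hl : lcpLen x y₁ = lcpLen x y₂ := by
      have := lcpLen_le_length_left_s15 x y₁
      have := lcpLen_le_length_left_s15 x y₂
      omega
    rw [← take_lcpLen_append_drop x y₁, ← take_lcpLen_append_drop x y₂, h.2, hl]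
  let G : ℕ × List (Fin k) → ℝ≥0∞ := fun it =>
    (κ * ρ⁻¹) ^ it.1 * (κ * ρ) ^ it.2.length * ρ ^ x.length
  have hterm : ∀ y, treeKernel x y * ρ ^ y.length = G (branch y) := by
    intro y
    obtain ⟨a, ha⟩ : ∃ a, x.length = a + lcpLen x y :=
      ⟨_, (Nat.sub_add_cancel (lcpLen_le_length_left_s15 x y)).symm⟩
    obtain ⟨b, hb⟩ : ∃ b, y.length = lcpLen x y + b :=
      ⟨_, (Nat.add_sub_cancel' (lcpLen_le_length_right_s15 x y)).symm⟩
    simp only [G, branch, treeKernel, tdist, List.length_drop, ha, hb, Nat.add_sub_cancel,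
      Nat.add_sub_cancel_left]
    calc κ ^ (a + b) * ρ ^ (lcpLen x y + b)
        = κ ^ (a + b) * ρ ^ (lcpLen x y + b) * (ρ⁻¹ * ρ) ^ a := by
          rw [ENNReal.inv_mul_cancel hρ0 hρ_top, one_pow, mul_one]
      _ = _ := by ring
  have hgeom : (k : ℝ≥0∞) * (κ * ρ) = ρ := by
    rw [← mul_assoc, ENNReal.mul_inv_cancel (by exact_mod_cast hk) (ENNReal.natCast_ne_top k),
      one_mul]
  calc ∑' y, treeKernel x y * ρ ^ y.length
      = ∑' y, G (branch y) := tsum_congr hterm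
    _ ≤ ∑' it, G it := ENNReal.tsum_comp_le_tsum_of_injective hinj G
    _ = (∑' i : ℕ, (κ * ρ⁻¹) ^ i) * (∑' t : List (Fin k), (κ * ρ) ^ t.length) *
          ρ ^ x.length := by
        rw [ENNReal.tsum_prod', ← ENNReal.tsum_mul_right, ← ENNReal.tsum_mul_right]
        simp only [G, ENNReal.tsum_mul_left, ENNReal.tsum_mul_right]
    _ = (1 - κ * ρ⁻¹)⁻¹ * (1 - ρ)⁻¹ * ρ ^ x.length := by
        rw [tsum_pow_length, hgeom, ENNReal.tsum_geometric, ENNReal.tsum_geometric]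

theorem exists_tsum_treeKernel_mul_rpow_pow_length_le (hk : 2 ≤ k) {s : ℝ} (hs0 : 0 < s)
    (hs1 : s < 1) :
    ∃ A : ℝ≥0, ∀ x : V k, ∑' y, treeKernel x y * ((k : ℝ≥0∞)⁻¹ ^ s) ^ y.length ≤
      A * ((k : ℝ≥0∞)⁻¹ ^ s) ^ x.length := by
  set κ : ℝ≥0∞ := (k : ℝ≥0∞)⁻¹
  have hκ0 : 0 < κ := ENNReal.inv_pos.2 (ENNReal.natCast_ne_top k)
  have hκ1 : κ < 1 := ENNReal.inv_lt_one.2 (by exact_mod_cast hk)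
  set ρ := κ ^ s
  have hρ1 : ρ < 1 := ENNReal.rpow_lt_one hκ1 hs0
  have hκρ : κ < ρ := by
    simpa using ENNReal.rpow_lt_rpow_of_exponent_gt hκ0 hκ1 hs1
  have hρ0 : ρ ≠ 0 := (hκ0.trans hκρ).ne'
  have hfin : (1 - κ * ρ⁻¹)⁻¹ * (1 - ρ)⁻¹ ≠ ∞ := by
    refine ENNReal.mul_ne_top (ENNReal.inv_ne_top.2 ?_) (ENNReal.inv_ne_top.2 ?_)
    · refine (tsub_pos_of_lt ?_).ne'
      rwa [← div_eq_mul_inv, ENNReal.div_lt_iff (.inl hρ0) (.inl hρ1.ne_top), one_mul]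
    · exact (tsub_pos_of_lt hρ1).ne'
  refine ⟨((1 - κ * ρ⁻¹)⁻¹ * (1 - ρ)⁻¹).toNNReal, fun x => ?_⟩
  rw [ENNReal.coe_toNNReal hfin]
  exact tsum_treeKernel_mul_pow_length_le (by omega) hρ0 hρ1.ne_top x

theorem exists_tsum_treeKernel_mul_rpow_le (hk : 2 ≤ k) {p : ℝ} (hp : 1 < p) :
    ∃ C : ℝ≥0, ∀ g : V k → ℝ≥0∞,
      ∑' x, (∑' y, treeKernel x y * g y) ^ p ≤ C * ∑' x, g x ^ p := by
  set p' := p.conjExponent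
  have hpp' : p.HolderConjugate p' := .conjExponent hp
  set κ : ℝ≥0∞ := (k : ℝ≥0∞)⁻¹
  have hκ0 : κ ≠ 0 := ENNReal.inv_ne_zero.2 (ENNReal.natCast_ne_top k)
  have hκ : κ ≠ ∞ := ENNReal.inv_ne_top.2 (by exact_mod_cast (by omega : k ≠ 0))
  set h : V k → ℝ≥0∞ := fun x => (κ ^ (1 / (p * p'))) ^ x.length
  have hpow : ∀ (t : ℝ) (x : V k), h x ^ t = (κ ^ (t / (p * p'))) ^ x.length := fun t x => by
    rw [← ENNReal.rpow_natCast_mul, ← ENNReal.rpow_mul, ← ENNReal.rpow_mul_natCast]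
    ring_nf
  have hp'_exp : p' / (p * p') = 1 / p := by field_simp [hpp'.symm.ne_zero]
  have hp_exp : p / (p * p') = 1 / p' := by field_simp [hpp'.ne_zero]
  obtain ⟨A, hA⟩ := exists_tsum_treeKernel_mul_rpow_pow_length_le hk (s := 1 / p)
    hpp'.one_div_pos (by rw [div_lt_one hpp'.pos]; exact hp)
  obtain ⟨B, hB⟩ := exists_tsum_treeKernel_mul_rpow_pow_length_le hk (s := 1 / p')
    hpp'.symm.one_div_pos (by rw [div_lt_one hpp'.symm.pos]; exact hpp'.symm.lt)
  refine ⟨A ^ (p - 1) * B, fun g => ?_⟩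
  rw [ENNReal.coe_mul, ENNReal.coe_rpow_of_nonneg _ hpp'.sub_one_pos.le]
  refine schur_test treeKernel hpp' (h := h) (fun x => pow_ne_zero _ ?_) (fun x => ?_)
    (fun x => ?_) (fun y => ?_) g
  · exact (ENNReal.rpow_pos (pos_iff_ne_zero.2 hκ0) hκ).ne'
  · exact ENNReal.pow_ne_top (ENNReal.rpow_ne_top_of_nonneg
      (one_div_pos.2 (mul_pos hpp'.pos hpp'.symm.pos)).le hκ)
  · simp_rw [hpow, hp'_exp]
    exact hA x
  · simp_rw [hpow, hp_exp, treeKernel_comm _ y]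
    exact hB y

theorem lq_Mball_le_tsum_treeKernel_mul_lq {ι : Type*} (hk : k ≠ 0) {q : ℝ} (hq : 1 ≤ q)
    (f : ι → V k → ℝ≥0∞) (x : V k) :
    (∑' j, Mball (f j) x ^ q) ^ (1 / q) ≤
      ∑' y, treeKernel x y * (∑' j, f j y ^ q) ^ (1 / q) := by
  have hq0 : 0 < q := by linarith
  calc (∑' j, Mball (f j) x ^ q) ^ (1 / q)
      ≤ (∑' j, (∑' y, treeKernel x y * f j y) ^ q) ^ (1 / q) := by
        gcongr with j
        exact Mball_le_tsum_treeKernel_mul hk (f j) x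
    _ ≤ ∑' y, (∑' j, (treeKernel x y * f j y) ^ q) ^ (1 / q) := ENNReal.Lp_tsum_le_tsum_Lp _ hq
    _ = ∑' y, treeKernel x y * (∑' j, f j y ^ q) ^ (1 / q) := tsum_congr fun y => by
        simp_rw [ENNReal.mul_rpow_of_nonneg _ _ hq0.le, ENNReal.tsum_mul_left]
        rw [ENNReal.mul_rpow_of_nonneg _ _ (by positivity), one_div,
          ENNReal.rpow_rpow_inv hq0.ne']

end KaryTree

/-- Vector-valued maximal inequality on the infinite rooted `k`-ary tree:
for `1 < q ≤ p < ∞`, `‖(Σ_j (Mf_j)^q)^{1/q}‖_{L^p} ≤ c_{p,q} ‖(Σ_j |f_j|^q)^{1/q}‖_{L^p}`. -/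
theorem stmt15 (k : ℕ) (hk : 2 ≤ k) (p q : ℝ) (hq : 1 < q) (hpq : q ≤ p) :
    ∃ c : ℝ≥0, ∀ f : ℕ → V k → ℝ,
      (∑' x : V k, (∑' j : ℕ, (Mball (absE (f j)) x) ^ q) ^ (p / q)) ^ (1 / p) ≤
        (c : ℝ≥0∞) *
          (∑' x : V k, (∑' j : ℕ, (ENNReal.ofReal |f j x|) ^ q) ^ (p / q)) ^ (1 / p) := by
  have hp : 1 < p := hq.trans_le hpq
  have hp0 : 0 ≤ 1 / p := by positivity
  obtain ⟨C, hC⟩ := exists_tsum_treeKernel_mul_rpow_le hk hp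
  refine ⟨C ^ (1 / p), fun f => ?_⟩
  set g : V k → ℝ≥0∞ := fun y => (∑' j, ENNReal.ofReal |f j y| ^ q) ^ (1 / q)
  have hexp : ∀ a : ℝ≥0∞, a ^ (p / q) = (a ^ (1 / q)) ^ p := fun a => by
    rw [← ENNReal.rpow_mul, one_div_mul_eq_div]
  simp_rw [hexp]
  calc (∑' x, ((∑' j, Mball (absE (f j)) x ^ q) ^ (1 / q)) ^ p) ^ (1 / p)
      ≤ (∑' x, (∑' y, treeKernel x y * g y) ^ p) ^ (1 / p) := by
        gcongr with x
        exact lq_Mball_le_tsum_treeKernel_mul_lq (by omega) hq.le _ x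
    _ ≤ (C * ∑' x, g x ^ p) ^ (1 / p) := by gcongr; exact hC g
    _ = ↑(C ^ (1 / p)) * (∑' x, g x ^ p) ^ (1 / p) := by
        rw [ENNReal.mul_rpow_of_nonneg _ _ hp0, ENNReal.coe_rpow_of_nonneg _ hp0]
end
end
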